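/- arXiv:1810.07793 — 2 statements merged into one kernel-verified Lean document; each statement's English description precedes it below -/
import Mathlib

section
/- Let (X,d) be a compact metric space with diam(X) < D, let ε > 0, and let α, β be fully supported Borel probability measures on X each satisfying the Λ-doubling condition for some Λ > 0. Then for all x, x' ∈ X, |d_α^{(ε)}(x,x') − d_β^{(ε)}(x,x')| ≤ 2(1+2ε) · Φ_{Λ,D,ε}(√(d_{W,1}(α,β))). -/
/-!
By the triangle inequality for `d_{W,1}` (couplings are glued along their common marginal) it
suffices to show `d_{W,1}(m_α(x), m_β(x)) ≤ (1 + 2ε) Φ(η)` at every point, `η = √d_{W,1}(α, β)`.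
For `η ≥ 1` the trivial bound `2ε` does. Otherwise take `δ > η` and a coupling `μ` of `α, β` of
cost `≤ δ²`. The part of `μ` inside `B × B`, `B = B_ε(x)`, rescaled by
`1 / max (α B, β B) ≤ 1 / ψ`, is a sub-coupling of the two truncations; completing it by the
product of the leftovers costs at most `2ε` per unit of missing mass. Mass of `B` leaves `B × B`
either by moving more than `δ`, at most `δ` of it by Markov's inequality, or into the shell
`B_{ε+δ}(x) \ B`, at most `(1 + δ/ε)^Λ - 1` times the mass of `B` by doubling. Hence the missing
mass is at most `δ/ψ + (1 + δ/ε)^Λ - 1`, and `δ ↓ η` gives the claim.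
-/

open MeasureTheory Metric Set Filter

/-- The ℓ¹-Wasserstein distance: infimum over couplings of the expected distance. -/
noncomputable def wassersteinDist {X : Type*} [MeasurableSpace X] [PseudoMetricSpace X]
    (α β : Measure X) : ℝ :=
  sInf ((fun μ : Measure (X × X) => ∫ p, dist p.1 p.2 ∂μ) ''
    {μ : Measure (X × X) | μ.map Prod.fst = α ∧ μ.map Prod.snd = β})

/-- The (one-sided) Prokhorov distance between Borel probability measures. -/
noncomputable def prokhorovDist {X : Type*} [MeasurableSpace X] [PseudoMetricSpace X]
    (α β : Measure X) : ℝ :=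
  sInf {δ : ℝ | 0 < δ ∧ ∀ A : Set X, α A ≤ β (thickening δ A) + ENNReal.ofReal δ}

/-- ε-local truncation of α at x: restrict to the closed ε-ball and renormalize. -/
noncomputable def localTrunc {X : Type*} [MeasurableSpace X] [PseudoMetricSpace X]
    (α : Measure X) (ε : ℝ) (x : X) : Measure X :=
  (α (closedBall x ε))⁻¹ • α.restrict (closedBall x ε)

/-- The support of a measure: points all of whose neighborhoods have positive measure. -/
def msupport {X : Type*} [TopologicalSpace X] [MeasurableSpace X] (μ : Measure X) : Set X :=
  {x : X | ∀ U ∈ nhds x, 0 < μ U}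

/-- The Λ-doubling condition for a Borel measure: for points in the support,
`α (closedBall x r₁) / α (closedBall x r₂) ≤ (r₁/r₂)^Λ` whenever `r₁ ≥ r₂ > 0`. -/
def DoublingCond {X : Type*} [MeasurableSpace X] [PseudoMetricSpace X]
    (α : Measure X) (Λ : ℝ) : Prop :=
  ∀ x ∈ msupport α, ∀ r₁ r₂ : ℝ, r₂ ≤ r₁ → 0 < r₂ →
    α (closedBall x r₁) / α (closedBall x r₂) ≤ ENNReal.ofReal ((r₁ / r₂) ^ Λ)

/-- `ψ_{Λ,D}(r) = min(1, (r/D)^Λ)`. -/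
noncomputable def psiLD (Λ D r : ℝ) : ℝ := min 1 ((r / D) ^ Λ)

/-- `Φ_{Λ,D,ε}(η) = η/ψ_{Λ,D}(ε) + ((1+η/ε)^Λ − 1)`. -/
noncomputable def PhiLDE (Λ D ε η : ℝ) : ℝ := η / psiLD Λ D ε + ((1 + η / ε) ^ Λ - 1)

open ProbabilityTheory
open scoped ENNReal

lemma isProbabilityMeasure_of_fst_eq {X Y : Type*} [MeasurableSpace X] [MeasurableSpace Y]
    {μ : Measure (X × Y)} {α : Measure X} [IsProbabilityMeasure α] (h : μ.fst = α) :
    IsProbabilityMeasure μ :=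
  ⟨by rw [← Measure.fst_univ, h, measure_univ]⟩

lemma isProbabilityMeasure_of_snd_eq {X Y : Type*} [MeasurableSpace X] [MeasurableSpace Y]
    {μ : Measure (X × Y)} {β : Measure Y} [IsProbabilityMeasure β] (h : μ.snd = β) :
    IsProbabilityMeasure μ :=
  ⟨by rw [← Measure.snd_univ, h, measure_univ]⟩

section Wasserstein

variable {X : Type*} [PseudoMetricSpace X] [MeasurableSpace X]

noncomputable def transportCost (μ : Measure (X × X)) : ℝ := ∫ p, dist p.1 p.2 ∂μ

lemma transportCost_nonneg (μ : Measure (X × X)) : 0 ≤ transportCost μ :=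
  integral_nonneg fun _ => dist_nonneg

lemma transportCost_map_swap (μ : Measure (X × X)) :
    transportCost (μ.map Prod.swap) = transportCost μ := by
  refine (integral_map_equiv MeasurableEquiv.prodComm _).trans ?_
  exact integral_congr_ae (ae_of_all _ fun _ => dist_comm _ _)

lemma wassersteinDist_le_transportCost {α β : Measure X} {μ : Measure (X × X)}
    (h₁ : μ.fst = α) (h₂ : μ.snd = β) : wassersteinDist α β ≤ transportCost μ :=
  csInf_le ⟨0, by rintro _ ⟨ν, -, rfl⟩; exact transportCost_nonneg ν⟩ ⟨μ, ⟨h₁, h₂⟩, rfl⟩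

lemma exists_transportCost_lt_of_wassersteinDist_lt (α β : Measure X)
    [IsProbabilityMeasure α] [IsProbabilityMeasure β] {t : ℝ} (ht : wassersteinDist α β < t) :
    ∃ μ : Measure (X × X), μ.fst = α ∧ μ.snd = β ∧ transportCost μ < t := by
  obtain ⟨_, ⟨μ, ⟨h₁, h₂⟩, rfl⟩, hlt⟩ := exists_lt_of_csInf_lt
    (by exact ⟨_, α.prod β, ⟨Measure.fst_prod, Measure.snd_prod⟩, rfl⟩) ht
  exact ⟨μ, h₁, h₂, hlt⟩

lemma wassersteinDist_comm (α β : Measure X) : wassersteinDist α β = wassersteinDist β α := by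
  have swap_mem : ∀ {ρ₁ ρ₂ : Measure X} {t : ℝ},
      t ∈ (fun μ : Measure (X × X) => ∫ p, dist p.1 p.2 ∂μ) ''
        {μ | μ.map Prod.fst = ρ₁ ∧ μ.map Prod.snd = ρ₂} →
      t ∈ (fun μ : Measure (X × X) => ∫ p, dist p.1 p.2 ∂μ) ''
        {μ | μ.map Prod.fst = ρ₂ ∧ μ.map Prod.snd = ρ₁} := by
    rintro _ _ _ ⟨μ, ⟨h₁, h₂⟩, rfl⟩
    exact ⟨μ.map Prod.swap, ⟨Measure.fst_map_swap.trans h₂, Measure.snd_map_swap.trans h₁⟩,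
      transportCost_map_swap μ⟩
  unfold wassersteinDist
  exact congrArg sInf (Set.ext fun _ => ⟨swap_mem, swap_mem⟩)

lemma transportCost_le_mul_of_ae_dist_le {μ : Measure (X × X)} [IsFiniteMeasure μ] {L : ℝ}
    (h : ∀ᵐ p ∂μ, dist p.1 p.2 ≤ L) : transportCost μ ≤ L * μ.real univ :=
  (le_abs_self _).trans <| norm_integral_le_of_norm_le_const <| h.mono fun p hp => by
    rwa [Real.norm_of_nonneg (dist_nonneg (x := p.1) (y := p.2))]

lemma transportCost_smul (c : ℝ≥0∞) (μ : Measure (X × X)) :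
    transportCost (c • μ) = c.toReal * transportCost μ :=
  integral_smul_measure _ c

variable [OpensMeasurableSpace X] [SecondCountableTopology X] [BoundedSpace X]

lemma integrable_dist_comp {Y : Type*} [MeasurableSpace Y] (μ : Measure Y) [IsFiniteMeasure μ]
    {f g : Y → X} (hf : Measurable f) (hg : Measurable g) :
    Integrable (fun y => dist (f y) (g y)) μ :=
  .of_bound (hf.dist hg).aestronglyMeasurable (diam (univ : Set X)) <| ae_of_all _ fun _ => by
    rw [Real.norm_of_nonneg dist_nonneg]
    exact dist_le_diam_of_mem BoundedSpace.bounded_univ trivial trivial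

lemma transportCost_add (μ ν : Measure (X × X)) [IsFiniteMeasure μ] [IsFiniteMeasure ν] :
    transportCost (μ + ν) = transportCost μ + transportCost ν :=
  integral_add_measure (integrable_dist_comp μ measurable_fst measurable_snd)
    (integrable_dist_comp ν measurable_fst measurable_snd)

lemma transportCost_restrict_le (μ : Measure (X × X)) [IsFiniteMeasure μ] (s : Set (X × X)) :
    transportCost (μ.restrict s) ≤ transportCost μ :=
  setIntegral_le_integral (integrable_dist_comp μ measurable_fst measurable_snd)
    (ae_of_all _ fun _ => dist_nonneg)

lemma mul_measureReal_le_dist_le_transportCost (μ : Measure (X × X)) [IsFiniteMeasure μ]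
    (δ : ℝ) : δ * μ.real {p | δ ≤ dist p.1 p.2} ≤ transportCost μ :=
  mul_meas_ge_le_integral_of_nonneg (ae_of_all _ fun _ => dist_nonneg)
    (integrable_dist_comp μ measurable_fst measurable_snd) δ

end Wasserstein

section Gluing

variable {X Y Z : Type*} [MeasurableSpace X] [MeasurableSpace Y] [MeasurableSpace Z]

lemma MeasureTheory.Measure.compProd_prod_map_fst (ρ : Measure X) [SFinite ρ] (κ : Kernel X Y)
    [IsSFiniteKernel κ] (η : Kernel X Z) [IsMarkovKernel η] :
    (ρ ⊗ₘ (κ ×ₖ η)).map (Prod.map id Prod.fst) = ρ ⊗ₘ κ := by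
  rw [← Measure.compProd_map measurable_fst, ← Kernel.fst_eq, Kernel.fst_prod]

lemma MeasureTheory.Measure.compProd_prod_map_snd (ρ : Measure X) [SFinite ρ] (κ : Kernel X Y)
    [IsMarkovKernel κ] (η : Kernel X Z) [IsSFiniteKernel η] :
    (ρ ⊗ₘ (κ ×ₖ η)).map (Prod.map id Prod.snd) = ρ ⊗ₘ η := by
  rw [← Measure.compProd_map measurable_snd, ← Kernel.snd_eq, Kernel.snd_prod]

end Gluing

section Triangle

variable {X : Type*} [PseudoMetricSpace X] [MeasurableSpace X] [OpensMeasurableSpace X]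
  [SecondCountableTopology X]

lemma transportCost_map {Y : Type*} [MeasurableSpace Y] (ν : Measure Y) {f : Y → X × X}
    (hf : Measurable f) : transportCost (ν.map f) = ∫ y, dist (f y).1 (f y).2 ∂ν :=
  integral_map hf.aemeasurable measurable_dist.aestronglyMeasurable

variable [BoundedSpace X] [StandardBorelSpace X]

/-- Gluing: disintegrating both couplings along `ρ₂` gives a law of triples with `μ` and `ν` as
two-dimensional marginals; its outer marginal couples `ρ₁` and `ρ₃`. -/
lemma exists_transportCost_le_add {ρ₁ ρ₂ ρ₃ : Measure X} [IsProbabilityMeasure ρ₂]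
    {μ ν : Measure (X × X)} (hμ₁ : μ.fst = ρ₁) (hμ₂ : μ.snd = ρ₂) (hν₁ : ν.fst = ρ₂)
    (hν₂ : ν.snd = ρ₃) :
    ∃ ξ : Measure (X × X), ξ.fst = ρ₁ ∧ ξ.snd = ρ₃ ∧
      transportCost ξ ≤ transportCost μ + transportCost ν := by
  have : Nonempty X := nonempty_of_isProbabilityMeasure ρ₂
  have := isProbabilityMeasure_of_snd_eq hμ₂
  have := isProbabilityMeasure_of_fst_eq hν₁
  have hμs : ρ₂ ⊗ₘ (μ.map Prod.swap).condKernel = μ.map Prod.swap := by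
    rw [← hμ₂, ← Measure.fst_map_swap]; exact Measure.disintegrate _ _
  have hν : ρ₂ ⊗ₘ ν.condKernel = ν := by rw [← hν₁]; exact ν.disintegrate ν.condKernel
  set m := ρ₂ ⊗ₘ ((μ.map Prod.swap).condKernel ×ₖ ν.condKernel)
  have hm₁ : m.map (Prod.map id Prod.fst) = μ.map Prod.swap :=
    (Measure.compProd_prod_map_fst _ _ _).trans hμs
  have hm₂ : m.map (Prod.map id Prod.snd) = ν :=
    (Measure.compProd_prod_map_snd _ _ _).trans hν
  have hmeas₁ : Measurable (Prod.map id Prod.fst : X × X × X → X × X) := by fun_prop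
  have hmeas₂ : Measurable (Prod.map id Prod.snd : X × X × X → X × X) := by fun_prop
  refine ⟨m.map Prod.snd, ?_, ?_, ?_⟩
  · calc (m.map Prod.snd).fst = (m.map (Prod.map id Prod.fst)).snd := by
          rw [Measure.fst, Measure.snd, Measure.map_map measurable_fst measurable_snd,
            Measure.map_map measurable_snd hmeas₁]
          rfl
      _ = ρ₁ := by rw [hm₁, Measure.snd_map_swap, hμ₁]
  · calc (m.map Prod.snd).snd = (m.map (Prod.map id Prod.snd)).snd := by
          rw [Measure.snd, Measure.snd, Measure.map_map measurable_snd measurable_snd,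
            Measure.map_map measurable_snd hmeas₂]
          rfl
      _ = ρ₃ := by rw [hm₂, hν₂]
  · have hcost₁ : ∫ p, dist p.2.1 p.1 ∂m = transportCost μ := by
      rw [← transportCost_map_swap, ← hm₁, transportCost_map _ hmeas₁]
      exact integral_congr_ae (ae_of_all _ fun _ => dist_comm _ _)
    have hcost₂ : ∫ p, dist p.1 p.2.2 ∂m = transportCost ν := by
      rw [← hm₂, transportCost_map _ hmeas₂]
      rfl
    have hint₁ : Integrable (fun p => dist p.2.1 p.1) m :=
      integrable_dist_comp m (by fun_prop) (by fun_prop)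
    have hint₂ : Integrable (fun p => dist p.1 p.2.2) m :=
      integrable_dist_comp m (by fun_prop) (by fun_prop)
    calc transportCost (m.map Prod.snd) = ∫ p, dist p.2.1 p.2.2 ∂m :=
          transportCost_map _ measurable_snd
      _ ≤ ∫ p, (dist p.2.1 p.1 + dist p.1 p.2.2) ∂m :=
          integral_mono (integrable_dist_comp m (by fun_prop) (by fun_prop)) (hint₁.add hint₂)
            fun _ => dist_triangle _ _ _
      _ = transportCost μ + transportCost ν := by rw [integral_add hint₁ hint₂, hcost₁, hcost₂]

lemma wassersteinDist_triangle (ρ₁ ρ₂ ρ₃ : Measure X) [IsProbabilityMeasure ρ₁]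
    [IsProbabilityMeasure ρ₂] [IsProbabilityMeasure ρ₃] :
    wassersteinDist ρ₁ ρ₃ ≤ wassersteinDist ρ₁ ρ₂ + wassersteinDist ρ₂ ρ₃ := by
  refine le_of_forall_pos_lt_add fun τ hτ => ?_
  obtain ⟨μ, hμ₁, hμ₂, hμ⟩ :=
    exists_transportCost_lt_of_wassersteinDist_lt ρ₁ ρ₂ (lt_add_of_pos_right _ (half_pos hτ))
  obtain ⟨ν, hν₁, hν₂, hν⟩ :=
    exists_transportCost_lt_of_wassersteinDist_lt ρ₂ ρ₃ (lt_add_of_pos_right _ (half_pos hτ))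
  obtain ⟨ξ, hξ₁, hξ₂, hξ⟩ := exists_transportCost_le_add hμ₁ hμ₂ hν₁ hν₂
  linarith [wassersteinDist_le_transportCost hξ₁ hξ₂]

lemma abs_wassersteinDist_sub_le (ρ₁ ρ₂ ρ₁' ρ₂' : Measure X) [IsProbabilityMeasure ρ₁]
    [IsProbabilityMeasure ρ₂] [IsProbabilityMeasure ρ₁'] [IsProbabilityMeasure ρ₂'] :
    |wassersteinDist ρ₁ ρ₂ - wassersteinDist ρ₁' ρ₂'| ≤
      wassersteinDist ρ₁ ρ₁' + wassersteinDist ρ₂ ρ₂' := by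
  rw [abs_sub_le_iff]
  constructor
  · linarith [wassersteinDist_triangle ρ₁ ρ₁' ρ₂, wassersteinDist_triangle ρ₁' ρ₂' ρ₂,
      wassersteinDist_comm ρ₂' ρ₂]
  · linarith [wassersteinDist_triangle ρ₁' ρ₁ ρ₂', wassersteinDist_triangle ρ₁ ρ₂ ρ₂',
      wassersteinDist_comm ρ₁' ρ₁]

end Triangle

section PartialCoupling

variable {X : Type*} [MeasurableSpace X]

lemma MeasureTheory.Measure.inv_mul_measure_univ_smul (ν : Measure X) [IsFiniteMeasure ν] :
    ((ν univ)⁻¹ * ν univ) • ν = ν := by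
  rcases eq_or_ne (ν univ) 0 with h | h
  · rw [Measure.measure_univ_eq_zero.1 h, smul_zero]
  · rw [ENNReal.inv_mul_cancel h (measure_ne_top ν univ), one_smul]

lemma MeasureTheory.Measure.fst_inv_smul_prod {ν₁ ν₂ : Measure X} [IsFiniteMeasure ν₁]
    [IsFiniteMeasure ν₂] (h : ν₁ univ = ν₂ univ) : ((ν₁ univ)⁻¹ • ν₁.prod ν₂).fst = ν₁ := by
  rw [Measure.fst, Measure.map_smul, Measure.map_fst_prod, ← h, smul_smul,
    Measure.inv_mul_measure_univ_smul]

lemma MeasureTheory.Measure.snd_inv_smul_prod {ν₁ ν₂ : Measure X} [IsFiniteMeasure ν₁]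
    [IsFiniteMeasure ν₂] (h : ν₁ univ = ν₂ univ) : ((ν₁ univ)⁻¹ • ν₁.prod ν₂).snd = ν₂ := by
  rw [Measure.snd, Measure.map_smul, Measure.map_snd_prod, h, smul_smul,
    Measure.inv_mul_measure_univ_smul]

variable [PseudoMetricSpace X] [OpensMeasurableSpace X] [SecondCountableTopology X]
  [BoundedSpace X]

/-- A sub-coupling `γ` of two laws concentrated on a set of diameter `≤ L` is completed to a
coupling by the normalized product of the two leftover measures, at cost at most `L` per unit
of missing mass. -/
lemma wassersteinDist_le_transportCost_add {ρ₁ ρ₂ : Measure X} [IsProbabilityMeasure ρ₁]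
    [IsProbabilityMeasure ρ₂] {s : Set X} {L : ℝ} (hs : ∀ p ∈ s, ∀ q ∈ s, dist p q ≤ L)
    (h₁ : ρ₁ sᶜ = 0) (h₂ : ρ₂ sᶜ = 0) {γ : Measure (X × X)} [IsFiniteMeasure γ]
    (hγ₁ : γ.fst ≤ ρ₁) (hγ₂ : γ.snd ≤ ρ₂) :
    wassersteinDist ρ₁ ρ₂ ≤ transportCost γ + L * (1 - γ.real univ) := by
  set ν₁ := ρ₁ - γ.fst
  set ν₂ := ρ₂ - γ.snd
  have hν₁ : ν₁ univ = 1 - γ univ := by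
    rw [Measure.sub_apply .univ hγ₁, measure_univ, Measure.fst_univ]
  have hν₂ : ν₂ univ = 1 - γ univ := by
    rw [Measure.sub_apply .univ hγ₂, measure_univ, Measure.snd_univ]
  set π := (ν₁ univ)⁻¹ • ν₁.prod ν₂
  have hπ₁ : π.fst = ν₁ := Measure.fst_inv_smul_prod (hν₁.trans hν₂.symm)
  have hπ₂ : π.snd = ν₂ := Measure.snd_inv_smul_prod (hν₁.trans hν₂.symm)
  have : IsFiniteMeasure π := ⟨by rw [← Measure.fst_univ, hπ₁]; exact measure_lt_top _ _⟩
  have hν₁s : ∀ᵐ p ∂ν₁, p ∈ s :=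
    mem_ae_iff.2 (nonpos_iff_eq_zero.1 (h₁ ▸ Measure.sub_le (μ := ρ₁) sᶜ))
  have hν₂s : ∀ᵐ p ∂ν₂, p ∈ s :=
    mem_ae_iff.2 (nonpos_iff_eq_zero.1 (h₂ ▸ Measure.sub_le (μ := ρ₂) sᶜ))
  have hπ_dist : ∀ᵐ p ∂π, dist p.1 p.2 ≤ L :=
    Measure.ae_smul_measure (((Measure.quasiMeasurePreserving_fst.ae hν₁s).and
      (Measure.quasiMeasurePreserving_snd.ae hν₂s)).mono fun p hp => hs _ hp.1 _ hp.2) _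
  have hπ_mass : π.real univ = 1 - γ.real univ := by
    rw [measureReal_def, ← Measure.fst_univ, hπ₁, hν₁,
      ENNReal.toReal_sub_of_le ((Measure.fst_univ (ρ := γ) ▸ hγ₁ univ).trans_eq measure_univ)
        ENNReal.one_ne_top, ENNReal.toReal_one, measureReal_def]
  calc wassersteinDist ρ₁ ρ₂ ≤ transportCost (γ + π) :=
        wassersteinDist_le_transportCost
          (by rw [Measure.fst_add, hπ₁, add_comm, Measure.sub_add_cancel_of_le hγ₁])
          (by rw [Measure.snd_add, hπ₂, add_comm, Measure.sub_add_cancel_of_le hγ₂])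
    _ = transportCost γ + transportCost π := transportCost_add γ π
    _ ≤ transportCost γ + L * (1 - γ.real univ) := by
        rw [← hπ_mass]; exact add_le_add_right (transportCost_le_mul_of_ae_dist_le hπ_dist) _

end PartialCoupling

section LocalTruncation

variable {X : Type*} [PseudoMetricSpace X] [MeasurableSpace X] {α : Measure X} {ε : ℝ} {x : X}

lemma measure_closedBall_pos_of_mem_msupport (hx : x ∈ msupport α) (hε : 0 < ε) :
    0 < α (closedBall x ε) :=
  hx _ (closedBall_mem_nhds x hε)

lemma isProbabilityMeasure_localTrunc [IsFiniteMeasure α] (hx : x ∈ msupport α) (hε : 0 < ε) :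
    IsProbabilityMeasure (localTrunc α ε x) where
  measure_univ := by
    rw [localTrunc, Measure.smul_apply, Measure.restrict_apply_univ, smul_eq_mul,
      ENNReal.inv_mul_cancel (measure_closedBall_pos_of_mem_msupport hx hε).ne'
        (measure_ne_top α _)]

variable [OpensMeasurableSpace X]

lemma localTrunc_compl_closedBall : localTrunc α ε x (closedBall x ε)ᶜ = 0 := by
  rw [localTrunc, Measure.smul_apply, Measure.restrict_apply measurableSet_closedBall.compl,
    compl_inter_self, measure_empty, smul_zero]

lemma wassersteinDist_localTrunc_le_two_mul [SecondCountableTopology X] [BoundedSpace X]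
    {β : Measure X} [IsProbabilityMeasure α] [IsProbabilityMeasure β] (hαx : x ∈ msupport α)
    (hβx : x ∈ msupport β) (hε : 0 < ε) :
    wassersteinDist (localTrunc α ε x) (localTrunc β ε x) ≤ 2 * ε := by
  have := isProbabilityMeasure_localTrunc hαx hε
  have := isProbabilityMeasure_localTrunc hβx hε
  simpa [transportCost] using wassersteinDist_le_transportCost_add (γ := 0)
    (fun p hp q hq => (dist_le_diam_of_mem isBounded_closedBall hp hq).trans
      (diam_closedBall hε.le))
    localTrunc_compl_closedBall localTrunc_compl_closedBall
    (by rw [Measure.fst_zero]; exact Measure.zero_le _)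
    (by rw [Measure.snd_zero]; exact Measure.zero_le _)

end LocalTruncation

section Doubling

variable {X : Type*} [PseudoMetricSpace X] [MeasurableSpace X] {α : Measure X} {Λ : ℝ} {x : X}

lemma DoublingCond.measureReal_closedBall_le [IsFiniteMeasure α] (hα : DoublingCond α Λ)
    (hx : x ∈ msupport α) {r R : ℝ} (hr : 0 < r) (hrR : r ≤ R) :
    α.real (closedBall x R) ≤ (R / r) ^ Λ * α.real (closedBall x r) := by
  have h := (ENNReal.div_le_iff_le_mul (Or.inr ENNReal.ofReal_ne_top)
    (Or.inl (measure_ne_top _ _))).1 (hα x hx R r hrR hr)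
  rw [measureReal_def, measureReal_def,
    ← ENNReal.toReal_ofReal (Real.rpow_nonneg (div_nonneg (hr.le.trans hrR) hr.le) Λ),
    ← ENNReal.toReal_mul]
  exact ENNReal.toReal_mono (ENNReal.mul_ne_top ENNReal.ofReal_ne_top (measure_ne_top _ _)) h

lemma DoublingCond.psiLD_le_measureReal_closedBall [BoundedSpace X] [IsProbabilityMeasure α]
    (hα : DoublingCond α Λ) (hx : x ∈ msupport α) {D ε : ℝ} (hD : diam (univ : Set X) < D)
    (hε : 0 < ε) : psiLD Λ D ε ≤ α.real (closedBall x ε) := by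
  have hball : ∀ r, diam (univ : Set X) < r → closedBall x r = univ := fun r hr =>
    eq_univ_of_forall fun y => mem_closedBall.2
      ((dist_le_diam_of_mem BoundedSpace.bounded_univ trivial trivial).trans hr.le)
  rcases le_or_gt D ε with hDε | hεD
  · rw [hball ε (hD.trans_le hDε), probReal_univ]
    exact min_le_left _ _
  · have hD₀ : 0 < D := hε.trans hεD
    have h := hα.measureReal_closedBall_le hx hε hεD.le
    rw [hball D hD, probReal_univ] at h
    calc psiLD Λ D ε ≤ (ε / D) ^ Λ := min_le_right _ _
      _ = ((D / ε) ^ Λ)⁻¹ := by rw [← Real.inv_rpow (by positivity), inv_div]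
      _ ≤ α.real (closedBall x ε) := by
          rw [inv_le_iff_one_le_mul₀' (by positivity)]
          exact h

lemma DoublingCond.measureReal_closedBall_add_sdiff_le [OpensMeasurableSpace X]
    [IsFiniteMeasure α] (hα : DoublingCond α Λ) (hx : x ∈ msupport α) {ε δ : ℝ} (hε : 0 < ε)
    (hδ : 0 ≤ δ) :
    α.real (closedBall x (ε + δ) \ closedBall x ε) ≤
      ((1 + δ / ε) ^ Λ - 1) * α.real (closedBall x ε) := by
  have h := hα.measureReal_closedBall_le hx hε (le_add_of_nonneg_right hδ)
  rw [add_div, div_self hε.ne'] at h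
  rw [measureReal_sdiff (closedBall_subset_closedBall (le_add_of_nonneg_right hδ))
    measurableSet_closedBall]
  linarith

end Doubling

section MassEscape

variable {X : Type*} [PseudoMetricSpace X]

lemma thickening_closedBall_subset_closedBall (x : X) (ε δ : ℝ) :
    thickening δ (closedBall x ε) ⊆ closedBall x (ε + δ) := by
  intro y hy
  obtain ⟨z, hz, hyz⟩ := mem_thickening_iff.1 hy
  exact mem_closedBall.2 ((dist_triangle y z x).trans (by linarith [mem_closedBall.1 hz]))

variable [MeasurableSpace X]

lemma measureReal_fst_le_add {μ : Measure (X × X)} [IsFiniteMeasure μ] {s : Set X}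
    (hs : MeasurableSet s) (δ : ℝ) :
    μ.fst.real s ≤ μ.real (s ×ˢ s) + μ.real {p | δ ≤ dist p.1 p.2} +
      μ.snd.real (thickening δ s \ s) := by
  have hsub : Prod.fst ⁻¹' s ⊆
      s ×ˢ s ∪ {p | δ ≤ dist p.1 p.2} ∪ Prod.snd ⁻¹' (thickening δ s \ s) := by
    rintro ⟨p, q⟩ hp
    by_cases hq : q ∈ s
    · exact Or.inl (Or.inl ⟨hp, hq⟩)
    by_cases hpq : δ ≤ dist p q
    · exact Or.inl (Or.inr hpq)
    exact Or.inr ⟨mem_thickening_iff.2 ⟨p, hp, by rw [dist_comm]; exact not_le.1 hpq⟩, hq⟩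
  calc μ.fst.real s = μ.real (Prod.fst ⁻¹' s) := by rw [measureReal_def, Measure.fst_apply hs]; rfl
    _ ≤ μ.real (s ×ˢ s ∪ {p | δ ≤ dist p.1 p.2} ∪ Prod.snd ⁻¹' (thickening δ s \ s)) :=
        measureReal_mono hsub
    _ ≤ μ.real (s ×ˢ s) + μ.real {p | δ ≤ dist p.1 p.2} +
          μ.real (Prod.snd ⁻¹' (thickening δ s \ s)) :=
        (measureReal_union_le _ _).trans (add_le_add_left (measureReal_union_le _ _) _)
    _ ≤ _ := add_le_add_right (ENNReal.toReal_mono (measure_ne_top _ _)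
        (Measure.le_map_apply measurable_snd.aemeasurable _)) _

lemma measureReal_snd_le_add [OpensMeasurableSpace X] [SecondCountableTopology X]
    {μ : Measure (X × X)} [IsFiniteMeasure μ] {s : Set X} (hs : MeasurableSet s) (δ : ℝ) :
    μ.snd.real s ≤ μ.real (s ×ˢ s) + μ.real {p | δ ≤ dist p.1 p.2} +
      μ.fst.real (thickening δ s \ s) := by
  have h := measureReal_fst_le_add (μ := μ.map Prod.swap) hs δ
  have hdist : Prod.swap ⁻¹' {p : X × X | δ ≤ dist p.1 p.2} = {p | δ ≤ dist p.1 p.2} :=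
    ext fun p => by simp [dist_comm]
  rwa [Measure.fst_map_swap, Measure.snd_map_swap,
    map_measureReal_apply measurable_swap (hs.prod hs), preimage_swap_prod,
    map_measureReal_apply measurable_swap (measurableSet_le measurable_const measurable_dist),
    hdist] at h

end MassEscape

section LocalCoupling

variable {X Y : Type*} [MeasurableSpace X] [MeasurableSpace Y]

lemma MeasureTheory.Measure.fst_restrict_prod_le (μ : Measure (X × Y)) (s : Set X) (t : Set Y) :
    (μ.restrict (s ×ˢ t)).fst ≤ μ.fst.restrict s := by
  refine Measure.le_iff.2 fun u hu => ?_
  rw [Measure.fst_apply hu, Measure.restrict_apply (measurable_fst hu), Measure.restrict_apply hu]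
  exact (measure_mono (t := Prod.fst ⁻¹' (u ∩ s)) fun p hp => ⟨hp.1, hp.2.1⟩).trans
    (Measure.le_map_apply measurable_fst.aemeasurable (u ∩ s))

lemma MeasureTheory.Measure.snd_restrict_prod_le (μ : Measure (X × Y)) (s : Set X) (t : Set Y) :
    (μ.restrict (s ×ˢ t)).snd ≤ μ.snd.restrict t := by
  refine Measure.le_iff.2 fun u hu => ?_
  rw [Measure.snd_apply hu, Measure.restrict_apply (measurable_snd hu), Measure.restrict_apply hu]
  exact (measure_mono (t := Prod.snd ⁻¹' (u ∩ t)) fun p hp => ⟨hp.1, hp.2.2⟩).trans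
    (Measure.le_map_apply measurable_snd.aemeasurable (u ∩ t))

variable [PseudoMetricSpace X] {ε : ℝ} {x : X}

lemma fst_smul_restrict_le_localTrunc (μ : Measure (X × X)) {c : ℝ≥0∞}
    (hc : c ≤ (μ.fst (closedBall x ε))⁻¹) (t : Set X) :
    (c • μ.restrict (closedBall x ε ×ˢ t)).fst ≤ localTrunc μ.fst ε x := by
  rw [Measure.fst, Measure.map_smul]
  exact IsOrderedSMul.smul_le_smul hc (Measure.fst_restrict_prod_le μ _ t)

lemma snd_smul_restrict_le_localTrunc (μ : Measure (X × X)) {c : ℝ≥0∞}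
    (hc : c ≤ (μ.snd (closedBall x ε))⁻¹) (s : Set X) :
    (c • μ.restrict (s ×ˢ closedBall x ε)).snd ≤ localTrunc μ.snd ε x := by
  rw [Measure.snd, Measure.map_smul]
  exact IsOrderedSMul.smul_le_smul hc (Measure.snd_restrict_prod_le μ s _)

variable [OpensMeasurableSpace X] [SecondCountableTopology X] [BoundedSpace X]

lemma max_measureReal_closedBall_le {μ : Measure (X × X)} [IsFiniteMeasure μ] {Λ δ : ℝ}
    (hΛ : 0 ≤ Λ) (hε : 0 < ε) (hδ : 0 < δ) (hμ₁x : x ∈ msupport μ.fst) (hμ₂x : x ∈ msupport μ.snd)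
    (hμ₁ : DoublingCond μ.fst Λ) (hμ₂ : DoublingCond μ.snd Λ) (hμ : transportCost μ ≤ δ ^ 2) :
    max (μ.fst.real (closedBall x ε)) (μ.snd.real (closedBall x ε)) ≤
      μ.real (closedBall x ε ×ˢ closedBall x ε) + δ +
        ((1 + δ / ε) ^ Λ - 1) *
          max (μ.fst.real (closedBall x ε)) (μ.snd.real (closedBall x ε)) := by
  set B := closedBall x ε
  set K := (1 + δ / ε) ^ Λ - 1
  have hK : 0 ≤ K := sub_nonneg.2 (Real.one_le_rpow (le_add_of_nonneg_right (by positivity)) hΛ)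
  have hfar : μ.real {p | δ ≤ dist p.1 p.2} ≤ δ :=
    le_of_mul_le_mul_left ((mul_measureReal_le_dist_le_transportCost μ δ).trans
      (hμ.trans_eq (sq δ))) hδ
  have hshell : thickening δ B \ B ⊆ closedBall x (ε + δ) \ B :=
    sdiff_subset_sdiff_left (thickening_closedBall_subset_closedBall x ε δ)
  have hann₁ : μ.fst.real (thickening δ B \ B) ≤ K * max (μ.fst.real B) (μ.snd.real B) :=
    (measureReal_mono hshell).trans
      ((hμ₁.measureReal_closedBall_add_sdiff_le hμ₁x hε hδ.le).trans
        (mul_le_mul_of_nonneg_left (le_max_left _ _) hK))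
  have hann₂ : μ.snd.real (thickening δ B \ B) ≤ K * max (μ.fst.real B) (μ.snd.real B) :=
    (measureReal_mono hshell).trans
      ((hμ₂.measureReal_closedBall_add_sdiff_le hμ₂x hε hδ.le).trans
        (mul_le_mul_of_nonneg_left (le_max_right _ _) hK))
  have hB : MeasurableSet B := measurableSet_closedBall
  exact max_le (by linarith [measureReal_fst_le_add (μ := μ) hB δ])
    (by linarith [measureReal_snd_le_add (μ := μ) hB δ])

end LocalCoupling

section Stability

variable {X : Type*} [PseudoMetricSpace X] [MeasurableSpace X] [OpensMeasurableSpace X]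
  [SecondCountableTopology X] [BoundedSpace X] {D Λ ε : ℝ} {x : X}

lemma psiLD_pos (Λ : ℝ) {D ε : ℝ} (hD : 0 < D) (hε : 0 < ε) : 0 < psiLD Λ D ε :=
  lt_min one_pos (Real.rpow_pos_of_pos (div_pos hε hD) Λ)

/-- The sub-coupling is the part of `μ` inside `B × B`, `B` the `ε`-ball at `x`, rescaled by
`1 / max (μ.fst B) (μ.snd B)` so that its marginals stay below both local truncations. -/
theorem wassersteinDist_localTrunc_le_of_transportCost_le {μ : Measure (X × X)}
    [IsProbabilityMeasure μ] {δ : ℝ} (hD : diam (univ : Set X) < D) (hΛ : 0 ≤ Λ) (hε : 0 < ε)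
    (hδ : 0 < δ) (hμ₁x : x ∈ msupport μ.fst) (hμ₂x : x ∈ msupport μ.snd)
    (hμ₁ : DoublingCond μ.fst Λ) (hμ₂ : DoublingCond μ.snd Λ) (hμ : transportCost μ ≤ δ ^ 2) :
    wassersteinDist (localTrunc μ.fst ε x) (localTrunc μ.snd ε x) ≤
      δ * (δ + 2 * ε) / psiLD Λ D ε + 2 * ε * ((1 + δ / ε) ^ Λ - 1) := by
  have := isProbabilityMeasure_localTrunc hμ₁x hε
  have := isProbabilityMeasure_localTrunc hμ₂x hε
  set B := closedBall x ε
  set M := max (μ.fst.real B) (μ.snd.real B)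
  set K := (1 + δ / ε) ^ Λ - 1
  have hψ₀ := psiLD_pos Λ (diam_nonneg.trans_lt hD) hε
  have hψM : psiLD Λ D ε ≤ M :=
    (hμ₁.psiLD_le_measureReal_closedBall hμ₁x hD hε).trans (le_max_left _ _)
  have hM₀ : 0 < M := hψ₀.trans_le hψM
  have hmass : 1 - M⁻¹ * μ.real (B ×ˢ B) ≤ δ / M + K := by
    have hescape := max_measureReal_closedBall_le hΛ hε hδ hμ₁x hμ₂x hμ₁ hμ₂ hμ
    have : δ / M + K - (1 - M⁻¹ * μ.real (B ×ˢ B)) = (μ.real (B ×ˢ B) + δ + K * M - M) / M := by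
      field_simp
      ring
    exact sub_nonneg.1 (this ▸ div_nonneg (by linarith) hM₀.le)
  set γ := ENNReal.ofReal M⁻¹ • μ.restrict (B ×ˢ B)
  have : IsFiniteMeasure γ :=
    ⟨by
      rw [Measure.smul_apply]
      exact ENNReal.mul_lt_top ENNReal.ofReal_lt_top (measure_lt_top _ _)⟩
  have hc : ∀ (ν : Measure X) [IsFiniteMeasure ν], ν.real B ≤ M →
      ENNReal.ofReal M⁻¹ ≤ (ν B)⁻¹ := fun ν _ hν => by
    rw [ENNReal.ofReal_inv_of_pos hM₀, ← ofReal_measureReal]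
    exact ENNReal.inv_le_inv.2 (ENNReal.ofReal_le_ofReal hν)
  have hγcost : transportCost γ ≤ M⁻¹ * δ ^ 2 := by
    rw [transportCost_smul, ENNReal.toReal_ofReal (inv_nonneg.2 hM₀.le)]
    exact mul_le_mul_of_nonneg_left ((transportCost_restrict_le μ _).trans hμ)
      (inv_nonneg.2 hM₀.le)
  have hγmass : γ.real univ = M⁻¹ * μ.real (B ×ˢ B) := by
    rw [measureReal_ennreal_smul_apply, measureReal_restrict_apply_univ,
      ENNReal.toReal_ofReal (inv_nonneg.2 hM₀.le)]
  calc wassersteinDist (localTrunc μ.fst ε x) (localTrunc μ.snd ε x)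
      ≤ transportCost γ + 2 * ε * (1 - γ.real univ) :=
        wassersteinDist_le_transportCost_add
          (fun p hp q hq => (dist_le_diam_of_mem isBounded_closedBall hp hq).trans
            (diam_closedBall hε.le))
          localTrunc_compl_closedBall localTrunc_compl_closedBall
          (fst_smul_restrict_le_localTrunc μ (hc _ (le_max_left _ _)) B)
          (snd_smul_restrict_le_localTrunc μ (hc _ (le_max_right _ _)) B)
    _ ≤ M⁻¹ * δ ^ 2 + 2 * ε * (δ / M + K) := by
        rw [hγmass]
        gcongr
    _ ≤ (psiLD Λ D ε)⁻¹ * δ ^ 2 + 2 * ε * (δ / psiLD Λ D ε + K) := by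
        gcongr
    _ = δ * (δ + 2 * ε) / psiLD Λ D ε + 2 * ε * K := by
        ring

theorem wassersteinDist_localTrunc_le_sqrt {α β : Measure X} [IsProbabilityMeasure α]
    [IsProbabilityMeasure β] (hD : diam (univ : Set X) < D) (hΛ : 0 ≤ Λ) (hε : 0 < ε)
    (hαx : x ∈ msupport α) (hβx : x ∈ msupport β) (hα : DoublingCond α Λ)
    (hβ : DoublingCond β Λ) :
    wassersteinDist (localTrunc α ε x) (localTrunc β ε x) ≤
      √(wassersteinDist α β) * (√(wassersteinDist α β) + 2 * ε) / psiLD Λ D ε +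
        2 * ε * ((1 + √(wassersteinDist α β) / ε) ^ Λ - 1) := by
  set η := √(wassersteinDist α β)
  have hcont : ContinuousAt (fun δ => δ * (δ + 2 * ε) / psiLD Λ D ε +
      2 * ε * ((1 + δ / ε) ^ Λ - 1)) η := by
    fun_prop (disch := exact Or.inr hΛ)
  refine ge_of_tendsto (hcont.tendsto.mono_left (nhdsWithin_le_nhds (s := Ioi η)))
    (eventually_nhdsWithin_of_forall fun δ (hδ : η < δ) => ?_)
  have hδ₀ : 0 < δ := (Real.sqrt_nonneg _).trans_lt hδ
  obtain ⟨μ, rfl, rfl, hμ⟩ :=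
    exists_transportCost_lt_of_wassersteinDist_lt α β ((Real.sqrt_lt' hδ₀).1 hδ)
  have := isProbabilityMeasure_of_fst_eq (μ := μ) rfl
  exact wassersteinDist_localTrunc_le_of_transportCost_le hD hΛ hε hδ₀ hαx hβx hα hβ hμ.le

theorem wassersteinDist_localTrunc_le {α β : Measure X} [IsProbabilityMeasure α]
    [IsProbabilityMeasure β] (hD : diam (univ : Set X) < D) (hΛ : 0 ≤ Λ) (hε : 0 < ε)
    (hαx : x ∈ msupport α) (hβx : x ∈ msupport β) (hα : DoublingCond α Λ)
    (hβ : DoublingCond β Λ) :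
    wassersteinDist (localTrunc α ε x) (localTrunc β ε x) ≤
      (1 + 2 * ε) * PhiLDE Λ D ε √(wassersteinDist α β) := by
  set η := √(wassersteinDist α β)
  have hψ₀ := psiLD_pos Λ (diam_nonneg.trans_lt hD) hε
  have hη₀ : 0 ≤ η := Real.sqrt_nonneg _
  have hηψ : η ≤ η / psiLD Λ D ε := le_div_self hη₀ hψ₀ (min_le_left _ _)
  have hK : 0 ≤ (1 + η / ε) ^ Λ - 1 :=
    sub_nonneg.2 (Real.one_le_rpow (le_add_of_nonneg_right (by positivity)) hΛ)
  unfold PhiLDE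
  rcases le_or_gt 1 η with hη | hη
  · calc _ ≤ 2 * ε := wassersteinDist_localTrunc_le_two_mul hαx hβx hε
      _ ≤ (1 + 2 * ε) * 1 := by linarith
      _ ≤ _ := by gcongr; linarith
  · have hηη : η / psiLD Λ D ε * η ≤ η / psiLD Λ D ε :=
      mul_le_of_le_one_right (div_nonneg hη₀ hψ₀.le) hη.le
    calc _ ≤ _ := wassersteinDist_localTrunc_le_sqrt hD hΛ hε hαx hβx hα hβ
      _ = η / psiLD Λ D ε * η + 2 * ε * (η / psiLD Λ D ε) + 2 * ε * ((1 + η / ε) ^ Λ - 1) := by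
          ring
      _ ≤ _ := by linarith

end Stability

/-- **Stability of the Wasserstein transform metric `d_α^{(ε)}`** (Theorem 4 of the paper).
For a compact metric space with diam < D and fully supported Λ-doubling Borel
probability measures α, β:
`|d_α^{(ε)}(x,x') − d_β^{(ε)}(x,x')| ≤ 2(1+2ε) Φ_{Λ,D,ε}(√(d_{W,1}(α,β)))` for all x, x'. -/
theorem stability_of_wasserstein_transform_metric
    {X : Type*} [MetricSpace X] [CompactSpace X] [MeasurableSpace X] [BorelSpace X]
    (D Λ ε : ℝ) (hD : Metric.diam (Set.univ : Set X) < D) (hΛ : 0 < Λ) (hε : 0 < ε)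
    (α β : Measure X) [IsProbabilityMeasure α] [IsProbabilityMeasure β]
    (hαfull : msupport α = Set.univ) (hβfull : msupport β = Set.univ)
    (hα : DoublingCond α Λ) (hβ : DoublingCond β Λ) :
    ∀ x x' : X,
      |wassersteinDist (localTrunc α ε x) (localTrunc α ε x') -
        wassersteinDist (localTrunc β ε x) (localTrunc β ε x')| ≤
      2 * (1 + 2 * ε) * PhiLDE Λ D ε (Real.sqrt (wassersteinDist α β)) := by
  intro x x'
  have hαy (y : X) : y ∈ msupport α := hαfull ▸ mem_univ y
  have hβy (y : X) : y ∈ msupport β := hβfull ▸ mem_univ y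
  have := isProbabilityMeasure_localTrunc (hαy x) hε
  have := isProbabilityMeasure_localTrunc (hαy x') hε
  have := isProbabilityMeasure_localTrunc (hβy x) hε
  have := isProbabilityMeasure_localTrunc (hβy x') hε
  calc _ ≤ wassersteinDist (localTrunc α ε x) (localTrunc β ε x) +
        wassersteinDist (localTrunc α ε x') (localTrunc β ε x') :=
        abs_wassersteinDist_sub_le _ _ _ _
    _ ≤ _ := by
        linarith [wassersteinDist_localTrunc_le hD hΛ.le hε (hαy x) (hβy x) hα hβ,
          wassersteinDist_localTrunc_le hD hΛ.le hε (hαy x') (hβy x') hα hβ]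
end

section
/- Let X ⊂ ℝ be compact, and let α be a probability measure on X with a twice continuously differentiable density f. Let x < x' be points with f(x) ≠ 0 and f(x') ≠ 0. Then as ε → 0, d_α^{(ε)}(x,x') = (x' − x) + (1/3)·[f'(x')/f(x') − f'(x)/f(x)]·ε² + O(ε³). -/
open MeasureTheory Metric Set Filter

open Asymptotics intervalIntegral

/-!
For `ε < (x' - x) / 2` the two truncations live on `[x - ε, x + ε]` and `[x' - ε, x' + ε]`, which
are disjoint and in this order, so every coupling moves mass to the right and costs exactly the
difference of the means. The mean of the truncation at `y` is `y + (∫ f t * (t - y)) / ∫ f t` over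
`[y - ε, y + ε]`. Expanding `f` to first order at `y` with an `O((t - y)²)` remainder gives
`2 ε f y + O(ε³)` for the denominator and `(2/3) ε³ f' y + O(ε⁴)` for the numerator, so the mean is
`y + f' y / (3 f y) * ε² + O(ε³)`.
-/

open scoped NNReal ENNReal Topology

lemma integral_dist_eq_integral_sub_of_ae_le {μ : Measure (ℝ × ℝ)} (c : ℝ)
    (h₁ : ∀ᵐ s ∂μ.map Prod.fst, s ≤ c) (h₂ : ∀ᵐ t ∂μ.map Prod.snd, c ≤ t)
    (hi₁ : Integrable id (μ.map Prod.fst)) (hi₂ : Integrable id (μ.map Prod.snd)) :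
    ∫ p, dist p.1 p.2 ∂μ = ∫ t, t ∂μ.map Prod.snd - ∫ s, s ∂μ.map Prod.fst := by
  have hle : ∀ᵐ p ∂μ, p.1 ≤ p.2 := by
    filter_upwards [ae_of_ae_map measurable_fst.aemeasurable h₁,
      ae_of_ae_map measurable_snd.aemeasurable h₂] with p hp₁ hp₂ using hp₁.trans hp₂
  calc ∫ p, dist p.1 p.2 ∂μ = ∫ p, (p.2 - p.1) ∂μ := by
        refine integral_congr_ae ?_
        filter_upwards [hle] with p hp
        rw [Real.dist_eq, abs_of_nonpos (sub_nonpos.mpr hp), neg_sub]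
    _ = ∫ p, p.2 ∂μ - ∫ p, p.1 ∂μ :=
        integral_sub (hi₂.comp_measurable measurable_snd) (hi₁.comp_measurable measurable_fst)
    _ = ∫ t, t ∂μ.map Prod.snd - ∫ s, s ∂μ.map Prod.fst := by
        rw [integral_map (f := fun t => t) measurable_snd.aemeasurable aestronglyMeasurable_id,
          integral_map (f := fun s => s) measurable_fst.aemeasurable aestronglyMeasurable_id]

/-- When `β₁` lies to the left of `β₂`, every coupling has the same cost. -/
lemma wassersteinDist_eq_integral_sub_of_ae_le {β₁ β₂ : Measure ℝ} [IsProbabilityMeasure β₁]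
    [IsProbabilityMeasure β₂] (c : ℝ) (h₁ : ∀ᵐ s ∂β₁, s ≤ c) (h₂ : ∀ᵐ t ∂β₂, c ≤ t)
    (hi₁ : Integrable id β₁) (hi₂ : Integrable id β₂) :
    wassersteinDist β₁ β₂ = ∫ t, t ∂β₂ - ∫ s, s ∂β₁ := by
  have hcost : ∀ μ : Measure (ℝ × ℝ), μ.map Prod.fst = β₁ → μ.map Prod.snd = β₂ →
      ∫ p, dist p.1 p.2 ∂μ = ∫ t, t ∂β₂ - ∫ s, s ∂β₁ := by
    rintro μ rfl rfl
    exact integral_dist_eq_integral_sub_of_ae_le c h₁ h₂ hi₁ hi₂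
  have hfst : (β₁.prod β₂).map Prod.fst = β₁ := by simp
  have hsnd : (β₁.prod β₂).map Prod.snd = β₂ := by simp
  have himage : (fun μ : Measure (ℝ × ℝ) => ∫ p, dist p.1 p.2 ∂μ) ''
      {μ | μ.map Prod.fst = β₁ ∧ μ.map Prod.snd = β₂} = {∫ t, t ∂β₂ - ∫ s, s ∂β₁} := by
    refine eq_singleton_iff_unique_mem.mpr
      ⟨⟨β₁.prod β₂, ⟨hfst, hsnd⟩, hcost _ hfst hsnd⟩, ?_⟩
    rintro _ ⟨μ, ⟨hμ₁, hμ₂⟩, rfl⟩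
    exact hcost μ hμ₁ hμ₂
  rw [wassersteinDist, himage, csInf_singleton]

section LocalTrunc

variable {X : Type*} [MeasurableSpace X] [PseudoMetricSpace X]

lemma isProbabilityMeasure_localTrunc_s9 {α : Measure X} {ε : ℝ} {x : X}
    (h₀ : α (closedBall x ε) ≠ 0) (hfin : α (closedBall x ε) ≠ ∞) :
    IsProbabilityMeasure (localTrunc α ε x) :=
  ⟨by rw [localTrunc, Measure.smul_apply, Measure.restrict_apply_univ, smul_eq_mul,
    ENNReal.inv_mul_cancel h₀ hfin]⟩

lemma ae_mem_closedBall_localTrunc [OpensMeasurableSpace X] (α : Measure X) (ε : ℝ) (x : X) :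
    ∀ᵐ y ∂localTrunc α ε x, y ∈ closedBall x ε :=
  Measure.ae_smul_measure (ae_restrict_mem measurableSet_closedBall) _

lemma integral_localTrunc (α : Measure X) (ε : ℝ) (x : X) (g : X → ℝ) :
    ∫ y, g y ∂localTrunc α ε x = (α (closedBall x ε)).toReal⁻¹ * ∫ y in closedBall x ε, g y ∂α := by
  rw [localTrunc, MeasureTheory.integral_smul_measure, ENNReal.toReal_inv, smul_eq_mul]

end LocalTrunc

lemma integrable_id_localTrunc (α : Measure ℝ) (ε y : ℝ) [IsFiniteMeasure (localTrunc α ε y)] :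
    Integrable id (localTrunc α ε y) := by
  refine Integrable.of_bound aestronglyMeasurable_id (|y| + ε) ?_
  filter_upwards [ae_mem_closedBall_localTrunc α ε y] with t ht
  rw [mem_closedBall, Real.dist_eq] at ht
  calc ‖id t‖ = |y + (t - y)| := by rw [add_sub_cancel, id, Real.norm_eq_abs]
    _ ≤ |y| + ε := (abs_add_le _ _).trans (by gcongr)

section Density

variable {f : ℝ → ℝ} {y ε : ℝ}

lemma withDensity_ofReal_closedBall (hf : Continuous f) (hf0 : ∀ s, 0 ≤ f s) (hε : 0 ≤ ε) :
    volume.withDensity (fun s => ENNReal.ofReal (f s)) (closedBall y ε) =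
      ENNReal.ofReal (∫ t in (y - ε)..(y + ε), f t) := by
  rw [withDensity_apply _ measurableSet_closedBall, Real.closedBall_eq_Icc,
    ← ofReal_integral_eq_lintegral_ofReal hf.integrableOn_Icc (Eventually.of_forall hf0),
    integral_Icc_eq_integral_Ioc, ← intervalIntegral.integral_of_le (by linarith)]

lemma setIntegral_closedBall_withDensity_ofReal (hf : Continuous f) (hf0 : ∀ s, 0 ≤ f s)
    (hε : 0 ≤ ε) (g : ℝ → ℝ) :
    ∫ t in closedBall y ε, g t ∂volume.withDensity (fun s => ENNReal.ofReal (f s)) =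
      ∫ t in (y - ε)..(y + ε), f t * g t := by
  rw [setIntegral_withDensity_eq_setIntegral_toReal_smul hf.measurable.ennreal_ofReal
      (Eventually.of_forall fun _ => ENNReal.ofReal_lt_top) g measurableSet_closedBall,
    Real.closedBall_eq_Icc, integral_Icc_eq_integral_Ioc,
    ← intervalIntegral.integral_of_le (by linarith)]
  simp only [ENNReal.toReal_ofReal (hf0 _), smul_eq_mul]

lemma integral_localTrunc_withDensity_ofReal (hf : Continuous f) (hf0 : ∀ s, 0 ≤ f s)
    (hε : 0 ≤ ε) (g : ℝ → ℝ) :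
    ∫ t, g t ∂localTrunc (volume.withDensity fun s => ENNReal.ofReal (f s)) ε y =
      (∫ t in (y - ε)..(y + ε), f t * g t) / ∫ t in (y - ε)..(y + ε), f t := by
  rw [integral_localTrunc, withDensity_ofReal_closedBall hf hf0 hε,
    setIntegral_closedBall_withDensity_ofReal hf hf0 hε,
    ENNReal.toReal_ofReal (intervalIntegral.integral_nonneg (by linarith) fun t _ => hf0 t),
    inv_mul_eq_div]

lemma isProbabilityMeasure_localTrunc_withDensity_ofReal (hf : Continuous f)
    (hf0 : ∀ s, 0 ≤ f s) (hε : 0 ≤ ε) (hmass : 0 < ∫ t in (y - ε)..(y + ε), f t) :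
    IsProbabilityMeasure (localTrunc (volume.withDensity fun s => ENNReal.ofReal (f s)) ε y) := by
  refine isProbabilityMeasure_localTrunc_s9 ?_ ?_ <;> rw [withDensity_ofReal_closedBall hf hf0 hε]
  · exact (ENNReal.ofReal_pos.mpr hmass).ne'
  · exact ENNReal.ofReal_ne_top

end Density

noncomputable def localMeanOffset (f : ℝ → ℝ) (y ε : ℝ) : ℝ :=
  (∫ t in (y - ε)..(y + ε), f t * (t - y)) / ∫ t in (y - ε)..(y + ε), f t

lemma integral_id_localTrunc_withDensity_ofReal {f : ℝ → ℝ} {y ε : ℝ} (hf : Continuous f)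
    (hf0 : ∀ s, 0 ≤ f s) (hε : 0 ≤ ε) (hmass : 0 < ∫ t in (y - ε)..(y + ε), f t) :
    ∫ t, t ∂localTrunc (volume.withDensity fun s => ENNReal.ofReal (f s)) ε y =
      y + localMeanOffset f y ε := by
  set β := localTrunc (volume.withDensity fun s => ENNReal.ofReal (f s)) ε y
  have := isProbabilityMeasure_localTrunc_withDensity_ofReal hf hf0 hε hmass
  have hi : Integrable (fun t => t - y) β :=
    (integrable_id_localTrunc _ ε y).sub (integrable_const y)
  calc ∫ t, t ∂β = ∫ t, (y + (t - y)) ∂β := by simp only [add_sub_cancel]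
    _ = y + ∫ t, (t - y) ∂β := by
        rw [integral_add (integrable_const y) hi, MeasureTheory.integral_const, probReal_univ,
          one_smul]
    _ = y + localMeanOffset f y ε := by
        rw [integral_localTrunc_withDensity_ofReal hf hf0 hε, localMeanOffset]

section Taylor

variable {f : ℝ → ℝ} {y : ℝ}

lemma abs_taylor_remainder_le_of_lipschitzOnWith {s : Set ℝ} {K : ℝ≥0} {t : ℝ}
    (hs : Convex ℝ s) (hf : ∀ u ∈ s, DifferentiableAt ℝ f u) (hK : LipschitzOnWith K (deriv f) s)
    (hy : y ∈ s) (ht : t ∈ s) :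
    |f t - f y - deriv f y * (t - y)| ≤ K * (t - y) ^ 2 := by
  have hseg : segment ℝ y t ⊆ s := hs.segment_subset hy ht
  have hφ : ∀ u ∈ s, HasDerivAt (fun v => f v - deriv f y * v) (deriv f u - deriv f y) u :=
    fun u hu => (hf u hu).hasDerivAt.sub ((hasDerivAt_id u).const_mul (deriv f y) |>.congr_deriv
      (mul_one _))
  have hbound : ∀ u ∈ segment ℝ y t, ‖deriv (fun v => f v - deriv f y * v) u‖ ≤ K * |t - y| := by
    intro u hu
    rw [(hφ u (hseg hu)).deriv, Real.norm_eq_abs, ← Real.dist_eq]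
    calc dist (deriv f u) (deriv f y) ≤ K * dist u y := hK.dist_le_mul u (hseg hu) y hy
      _ ≤ K * |t - y| := by
        rw [segment_eq_uIcc] at hu
        exact mul_le_mul_of_nonneg_left (abs_sub_left_of_mem_uIcc hu) K.2
  have hmvt := (convex_segment y t).norm_image_sub_le_of_norm_deriv_le
    (fun u hu => (hφ u (hseg hu)).differentiableAt) hbound (left_mem_segment ℝ y t)
    (right_mem_segment ℝ y t)
  rw [Real.norm_eq_abs, Real.norm_eq_abs] at hmvt
  calc |f t - f y - deriv f y * (t - y)| = |f t - deriv f y * t - (f y - deriv f y * y)| := by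
        ring_nf
    _ ≤ K * |t - y| * |t - y| := hmvt
    _ = K * (t - y) ^ 2 := by rw [mul_assoc, ← sq, sq_abs]

lemma ContDiff.exists_eventually_abs_taylor_remainder_le (hf : ContDiff ℝ 2 f) (y : ℝ) :
    ∃ K : ℝ, ∀ᶠ ε in 𝓝[>] 0, ∀ t ∈ Icc (y - ε) (y + ε),
      |f t - f y - deriv f y * (t - y)| ≤ K * ε ^ 2 := by
  obtain ⟨K, U, hU, hK⟩ := (hf.deriv' (n := 1)).contDiffAt.exists_lipschitzOnWith (x := y)
  obtain ⟨δ, hδ, hball⟩ := Metric.mem_nhds_iff.mp hU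
  refine ⟨K, ?_⟩
  filter_upwards [Ioo_mem_nhdsGT hδ] with ε hε t ht
  have hsub : Icc (y - ε) (y + ε) ⊆ ball y δ :=
    Real.closedBall_eq_Icc ▸ closedBall_subset_ball hε.2
  have hty : |t - y| ≤ ε := abs_sub_le_iff.mpr ⟨by linarith [ht.2], by linarith [ht.1]⟩
  calc |f t - f y - deriv f y * (t - y)| ≤ K * (t - y) ^ 2 :=
        abs_taylor_remainder_le_of_lipschitzOnWith (convex_ball y δ)
          (fun u _ => (hf.differentiable two_ne_zero).differentiableAt) (hK.mono hball)
          (mem_ball_self hδ) (hsub ht)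
    _ ≤ K * ε ^ 2 :=
        mul_le_mul_of_nonneg_left (sq_le_sq' (abs_le.mp hty).1 (abs_le.mp hty).2) K.2

end Taylor

section Moments

variable {f : ℝ → ℝ} {y : ℝ}

lemma integral_sub_pow (y ε : ℝ) (j : ℕ) :
    ∫ t in (y - ε)..(y + ε), (t - y) ^ j = (ε ^ (j + 1) - (-ε) ^ (j + 1)) / (j + 1) := by
  rw [intervalIntegral.integral_comp_sub_right (fun t => t ^ j), integral_pow]
  ring_nf

lemma integral_mul_sub_pow_eq (hf : Continuous f) (y ε : ℝ) (k : ℕ) :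
    ∫ t in (y - ε)..(y + ε), f t * (t - y) ^ k =
      f y * (∫ t in (y - ε)..(y + ε), (t - y) ^ k) +
        deriv f y * (∫ t in (y - ε)..(y + ε), (t - y) ^ (k + 1)) +
          ∫ t in (y - ε)..(y + ε), (f t - f y - deriv f y * (t - y)) * (t - y) ^ k := by
  have hsplit : (fun t => f t * (t - y) ^ k) = fun t =>
      (f y * (t - y) ^ k + deriv f y * (t - y) ^ (k + 1)) +
        (f t - f y - deriv f y * (t - y)) * (t - y) ^ k := by
    funext t; ring
  have hii : ∀ g : ℝ → ℝ, Continuous g → IntervalIntegrable g volume (y - ε) (y + ε) :=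
    fun g hg => hg.intervalIntegrable _ _
  rw [hsplit, intervalIntegral.integral_add (hii _ (by fun_prop)) (hii _ (by fun_prop)),
    intervalIntegral.integral_add (hii _ (by fun_prop)) (hii _ (by fun_prop)),
    intervalIntegral.integral_const_mul, intervalIntegral.integral_const_mul]

lemma isBigO_integral_mul_sub_pow {g : ℝ → ℝ} {K : ℝ} (k : ℕ)
    (hg : ∀ᶠ ε in 𝓝[>] 0, ∀ t ∈ Icc (y - ε) (y + ε), |g t| ≤ K * ε ^ 2) :
    (fun ε => ∫ t in (y - ε)..(y + ε), g t * (t - y) ^ k) =O[𝓝[>] 0] fun ε => ε ^ (k + 3) := by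
  refine IsBigO.of_bound (2 * K) ?_
  filter_upwards [hg, self_mem_nhdsWithin] with ε hgε (hε : 0 < ε)
  have hle : y - ε ≤ y + ε := by linarith
  calc ‖∫ t in (y - ε)..(y + ε), g t * (t - y) ^ k‖
      ≤ K * ε ^ 2 * ε ^ k * |y + ε - (y - ε)| := by
        refine intervalIntegral.norm_integral_le_of_norm_le_const fun t ht => ?_
        rw [uIoc_of_le hle] at ht
        have hty : |t - y| ≤ ε := abs_sub_le_iff.mpr ⟨by linarith [ht.2], by linarith [ht.1]⟩
        rw [Real.norm_eq_abs, abs_mul, abs_pow]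
        exact mul_le_mul (hgε t (Ioc_subset_Icc_self ht)) (pow_le_pow_left₀ (abs_nonneg _) hty k)
          (by positivity) ((abs_nonneg _).trans (hgε t (Ioc_subset_Icc_self ht)))
    _ = 2 * K * ‖ε ^ (k + 3)‖ := by
        rw [norm_pow, Real.norm_of_nonneg hε.le, show y + ε - (y - ε) = 2 * ε by ring,
          abs_of_pos (by positivity)]
        ring

lemma eventually_mul_le_integral (hf : Continuous f) (hfy : 0 < f y) :
    ∀ᶠ ε in 𝓝[>] 0, ε * f y ≤ ∫ t in (y - ε)..(y + ε), f t := by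
  obtain ⟨δ, hδ, hnear⟩ := Metric.eventually_nhds_iff.mp
    (hf.continuousAt.eventually (lt_mem_nhds (half_lt_self hfy)))
  filter_upwards [Ioo_mem_nhdsGT hδ] with ε hε
  calc ε * f y = ∫ _ in (y - ε)..(y + ε), f y / 2 := by
        rw [intervalIntegral.integral_const, smul_eq_mul]; ring
    _ ≤ ∫ t in (y - ε)..(y + ε), f t := by
        refine intervalIntegral.integral_mono_on (by linarith [hε.1]) intervalIntegrable_const
          (hf.intervalIntegrable _ _) fun t ht => (hnear ?_).le
        rw [Real.dist_eq]
        exact (abs_sub_le_iff.mpr ⟨by linarith [ht.2], by linarith [ht.1]⟩).trans_lt hε.2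

lemma ContDiff.isBigO_integral_sub (hf : ContDiff ℝ 2 f) (y : ℝ) :
    (fun ε => (∫ t in (y - ε)..(y + ε), f t) - 2 * ε * f y) =O[𝓝[>] 0] fun ε => ε ^ 3 := by
  obtain ⟨K, hR⟩ := hf.exists_eventually_abs_taylor_remainder_le y
  refine (isBigO_integral_mul_sub_pow 0 hR).congr_left fun ε => ?_
  have h := integral_mul_sub_pow_eq hf.continuous y ε 0
  rw [integral_sub_pow, integral_sub_pow] at h
  simp only [pow_zero, mul_one] at h ⊢
  rw [h]
  ring

lemma ContDiff.isBigO_integral_mul_sub_sub (hf : ContDiff ℝ 2 f) (y : ℝ) :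
    (fun ε => (∫ t in (y - ε)..(y + ε), f t * (t - y)) - 2 / 3 * ε ^ 3 * deriv f y)
      =O[𝓝[>] 0] fun ε => ε ^ 4 := by
  obtain ⟨K, hR⟩ := hf.exists_eventually_abs_taylor_remainder_le y
  refine (isBigO_integral_mul_sub_pow 1 hR).congr_left fun ε => ?_
  have h := integral_mul_sub_pow_eq hf.continuous y ε 1
  rw [integral_sub_pow, integral_sub_pow] at h
  simp only [pow_one] at h ⊢
  rw [h]
  ring

end Moments

lemma isBigO_localMeanOffset_sub {f : ℝ → ℝ} {y : ℝ} (hf : ContDiff ℝ 2 f) (hfy : 0 < f y) :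
    (fun ε => localMeanOffset f y ε - 1 / 3 * (deriv f y / f y) * ε ^ 2) =O[𝓝[>] 0]
      fun ε => ε ^ 3 := by
  have hc := hf.continuous
  set mass := fun ε => ∫ t in (y - ε)..(y + ε), f t
  set moment := fun ε => ∫ t in (y - ε)..(y + ε), f t * (t - y)
  have hmass : (fun ε => mass ε - 2 * ε * f y) =O[𝓝[>] 0] fun ε => ε ^ 3 :=
    hf.isBigO_integral_sub y
  have hmoment : (fun ε => moment ε - 2 / 3 * ε ^ 3 * deriv f y) =O[𝓝[>] 0] fun ε => ε ^ 4 :=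
    hf.isBigO_integral_mul_sub_sub y
  have hinv : (fun ε => (mass ε)⁻¹) =O[𝓝[>] 0] fun ε => ε⁻¹ := by
    refine IsBigO.of_bound (f y)⁻¹ ?_
    filter_upwards [eventually_mul_le_integral hc hfy, self_mem_nhdsWithin] with ε hlow (hε : 0 < ε)
    have hpos : 0 < ε * f y := by positivity
    rw [norm_inv, norm_inv, Real.norm_of_nonneg (hpos.le.trans hlow), Real.norm_of_nonneg hε.le,
      ← mul_inv, mul_comm]
    exact inv_anti₀ hpos hlow
  have hpow : (fun ε : ℝ => ε ^ 2 * ε ^ 3) =O[𝓝[>] 0] fun ε => ε ^ 4 := by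
    simp only [← pow_add]
    exact (isLittleO_pow_pow (by norm_num)).isBigO.mono nhdsWithin_le_nhds
  -- Since `2 * (deriv f y / (3 * f y)) * f y = 2 / 3 * deriv f y`, the leading terms cancel in
  -- `moment - 1 / 3 * (deriv f y / f y) * ε ^ 2 * mass`.
  have hnum : (fun ε => (moment ε - 2 / 3 * ε ^ 3 * deriv f y) -
      1 / 3 * (deriv f y / f y) * (ε ^ 2 * (mass ε - 2 * ε * f y))) =O[𝓝[>] 0]
        fun ε => ε ^ 4 :=
    hmoment.sub ((((isBigO_refl (fun ε : ℝ => ε ^ 2) _).mul hmass).trans hpow).const_mul_left _)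
  refine (hnum.mul hinv).congr' ?_ ?_
  · filter_upwards [eventually_mul_le_integral hc hfy, self_mem_nhdsWithin] with ε hlow (hε : 0 < ε)
    have hmass₀ : mass ε ≠ 0 := ((by positivity : 0 < ε * f y).trans_le hlow).ne'
    change _ = moment ε / mass ε - _
    field_simp
    ring
  · filter_upwards [self_mem_nhdsWithin] with ε (hε : 0 < ε)
    field_simp

lemma wassersteinDist_localTrunc_withDensity_ofReal {f : ℝ → ℝ} {x x' ε : ℝ} (hf : Continuous f)
    (hf0 : ∀ s, 0 ≤ f s) (hε : 0 ≤ ε) (hsep : x + ε ≤ x' - ε)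
    (hx : 0 < ∫ t in (x - ε)..(x + ε), f t) (hx' : 0 < ∫ t in (x' - ε)..(x' + ε), f t) :
    wassersteinDist (localTrunc (volume.withDensity fun s => ENNReal.ofReal (f s)) ε x)
        (localTrunc (volume.withDensity fun s => ENNReal.ofReal (f s)) ε x') =
      (x' + localMeanOffset f x' ε) - (x + localMeanOffset f x ε) := by
  have := isProbabilityMeasure_localTrunc_withDensity_ofReal hf hf0 hε hx
  have := isProbabilityMeasure_localTrunc_withDensity_ofReal hf hf0 hε hx'
  rw [wassersteinDist_eq_integral_sub_of_ae_le (x + ε) ?_ ?_ (integrable_id_localTrunc _ ε x)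
    (integrable_id_localTrunc _ ε x'), integral_id_localTrunc_withDensity_ofReal hf hf0 hε hx,
    integral_id_localTrunc_withDensity_ofReal hf hf0 hε hx']
  · filter_upwards [ae_mem_closedBall_localTrunc _ ε x] with t ht
    exact (Real.closedBall_eq_Icc ▸ ht).2
  · filter_upwards [ae_mem_closedBall_localTrunc _ ε x'] with t ht
    exact hsep.trans (Real.closedBall_eq_Icc ▸ ht).1

theorem wasserstein_transform_taylor_expansion_general
    (f : ℝ → ℝ) (hf : ContDiff ℝ 2 f) (hf0 : ∀ s, 0 ≤ f s)
    (α : Measure ℝ) (hα : α = MeasureTheory.volume.withDensity fun s => ENNReal.ofReal (f s))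
    (x x' : ℝ) (hxx : x < x') (hfx : f x ≠ 0) (hfx' : f x' ≠ 0) :
    (fun ε : ℝ =>
        wassersteinDist (localTrunc α ε x) (localTrunc α ε x') -
          ((x' - x) + (1 / 3) * (deriv f x' / f x' - deriv f x / f x) * ε ^ 2))
      =O[nhdsWithin 0 (Set.Ioi 0)] fun ε : ℝ => ε ^ 3 := by
  subst hα
  have hfx₀ : 0 < f x := (hf0 x).lt_of_ne' hfx
  have hfx₀' : 0 < f x' := (hf0 x').lt_of_ne' hfx'
  refine ((isBigO_localMeanOffset_sub hf hfx₀').sub (isBigO_localMeanOffset_sub hf hfx₀)).congr'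
    ?_ EventuallyEq.rfl
  filter_upwards [Ioo_mem_nhdsGT (show 0 < (x' - x) / 2 by linarith),
    eventually_mul_le_integral hf.continuous hfx₀, eventually_mul_le_integral hf.continuous hfx₀']
    with ε hε hmass hmass'
  rw [wassersteinDist_localTrunc_withDensity_ofReal hf.continuous hf0 hε.1.le
    (by linarith [hε.2]) ((mul_pos hε.1 hfx₀).trans_le hmass)
    ((mul_pos hε.1 hfx₀').trans_le hmass')]
  ring

/-- **Remark 4 of the paper** (Taylor expansion of the Wasserstein transform on ℝ):
if `X ⊂ ℝ` is compact and α is a probability measure with C² density f supported in X,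
then for `x < x'` with `f x ≠ 0` and `f x' ≠ 0`, as `ε → 0⁺`,
`d_α^{(ε)}(x,x') = (x'−x) + (1/3)[f'(x')/f(x') − f'(x)/f(x)] ε² + O(ε³)`. -/
theorem wasserstein_transform_taylor_expansion
    (X : Set ℝ) (hX : IsCompact X)
    (f : ℝ → ℝ) (hf : ContDiff ℝ 2 f) (hf0 : ∀ s, 0 ≤ f s)
    (hsupp : Function.support f ⊆ X)
    (α : Measure ℝ) (hα : α = MeasureTheory.volume.withDensity fun s => ENNReal.ofReal (f s))
    [IsProbabilityMeasure α]
    (x x' : ℝ) (hxx : x < x') (hfx : f x ≠ 0) (hfx' : f x' ≠ 0) :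
    (fun ε : ℝ =>
        wassersteinDist (localTrunc α ε x) (localTrunc α ε x') -
          ((x' - x) + (1 / 3) * (deriv f x' / f x' - deriv f x / f x) * ε ^ 2))
      =O[nhdsWithin 0 (Set.Ioi 0)] fun ε : ℝ => ε ^ 3 :=
  wasserstein_transform_taylor_expansion_general f hf hf0 α hα x x' hxx hfx hfx'
end
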